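/- For the function f(x,u,p,q,r) = r², at every point (x,u,p,q,r) ∈ ℝ⁵ the Cartan invariants satisfy I₄ = 1/3, I₅ = 0, I₆ = −r, and I₈ = (27/10)·r²; in particular I₄ ≠ 0 everywhere and I₈ ≠ 0 at every point with r ≠ 0. -/

import Mathlib

noncomputable section

/-- Functions of the five jet variables `(x, u, p, q, r)`. -/
abbrev Jet5 := ℝ → ℝ → ℝ → ℝ → ℝ → ℝ

/-- Partial derivative `F_x`. -/
def pX (F : Jet5) (x u p q r : ℝ) : ℝ := deriv (fun t => F t u p q r) x
/-- Partial derivative `F_u`. -/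
def pU (F : Jet5) (x u p q r : ℝ) : ℝ := deriv (fun t => F x t p q r) u
/-- Partial derivative `F_p`. -/
def pP (F : Jet5) (x u p q r : ℝ) : ℝ := deriv (fun t => F x u t q r) p
/-- Partial derivative `F_q`. -/
def pQ (F : Jet5) (x u p q r : ℝ) : ℝ := deriv (fun t => F x u p t r) q
/-- Partial derivative `F_r`. -/
def pR (F : Jet5) (x u p q r : ℝ) : ℝ := deriv (fun t => F x u p q t) r

/-- Total derivative operator `D̂ₓF = F_x + p F_u + q F_p + r F_q + f F_r`. -/
def Dhat (f F : Jet5) : Jet5 := fun x u p q r =>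
  pX F x u p q r + p * pU F x u p q r + q * pP F x u p q r + r * pQ F x u p q r
    + f x u p q r * pR F x u p q r

/-- Cartan invariant `I₀ = −f_r`. -/
def I0 (f : Jet5) : Jet5 := fun x u p q r => - pR f x u p q r

/-- Cartan invariant `I₁ = (1/4)I₀² − (1/6)D̂ₓI₀`. -/
def I1 (f : Jet5) : Jet5 := fun x u p q r =>
  (1 / 4) * (I0 f x u p q r) ^ 2 - (1 / 6) * Dhat f (I0 f) x u p q r

/-- Cartan invariant `I₂ = −(1/2)D̂ₓI₀ − f_q`. -/
def I2 (f : Jet5) : Jet5 := fun x u p q r =>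
  -(1 / 2) * Dhat f (I0 f) x u p q r - pQ f x u p q r

/-- Cartan invariant `I₃ = −(1/8)(I₀)_r·I₀ + (1/4)(I₁)_r − (1/12)(I₂)_r`. -/
def I3 (f : Jet5) : Jet5 := fun x u p q r =>
  -(1 / 8) * pR (I0 f) x u p q r * I0 f x u p q r
    + (1 / 4) * pR (I1 f) x u p q r - (1 / 12) * pR (I2 f) x u p q r

/-- Cartan invariant `I₄ = −(1/6)(I₀)_r`. -/
def I4 (f : Jet5) : Jet5 := fun x u p q r => -(1 / 6) * pR (I0 f) x u p q r

/-- Cartan invariant on the branch `I₄ ≠ 0`: `I₅ = −(1/2)(I₄)_r/I₄²`. -/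
def I5 (f : Jet5) : Jet5 := fun x u p q r =>
  -(1 / 2) * pR (I4 f) x u p q r / (I4 f x u p q r) ^ 2

/-- Cartan invariant on the branch `I₄ ≠ 0`: `I₆ = −(3/2)I₀·I₄ − (I₂)_r − 6I₃`. -/
def I6 (f : Jet5) : Jet5 := fun x u p q r =>
  -(3 / 2) * I0 f x u p q r * I4 f x u p q r - pR (I2 f) x u p q r - 6 * I3 f x u p q r

/-- Cartan invariant on the branch `I₄ ≠ 0`:
`I₈ = (I₆/I₄²)(D̂ₓI₄ − (I₄)_r f) − (1/I₄)D̂ₓI₆ + (3/4)I₀² − (1/2)I₀I₆/I₄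
      + (3/10)I₂ + (1/3)I₆²/I₄² − (27/10)I₁`. -/
def I8 (f : Jet5) : Jet5 := fun x u p q r =>
  (I6 f x u p q r / (I4 f x u p q r) ^ 2)
      * (Dhat f (I4 f) x u p q r - pR (I4 f) x u p q r * f x u p q r)
    - (1 / I4 f x u p q r) * Dhat f (I6 f) x u p q r
    + (3 / 4) * (I0 f x u p q r) ^ 2
    - (1 / 2) * I0 f x u p q r * I6 f x u p q r / I4 f x u p q r
    + (3 / 10) * I2 f x u p q r
    + (1 / 3) * (I6 f x u p q r) ^ 2 / (I4 f x u p q r) ^ 2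
    - (27 / 10) * I1 f x u p q r

/-! Every invariant of `f = r²` turns out to depend on `r` alone. For such functions the partial
derivatives in `x, u, p, q` vanish and `D̂ₓ` reduces to `f · ∂_r`, so the invariants can be computed
one after another, in the order of their definitions, as explicit polynomials in `r`. -/

section OnlyR

variable (g : ℝ → ℝ) (x u p q r : ℝ)

@[simp]
lemma pX_fun_r : pX (fun _ _ _ _ r => g r) x u p q r = 0 := by simp [pX]
@[simp]
lemma pU_fun_r : pU (fun _ _ _ _ r => g r) x u p q r = 0 := by simp [pU]
@[simp]
lemma pP_fun_r : pP (fun _ _ _ _ r => g r) x u p q r = 0 := by simp [pP]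
@[simp]
lemma pQ_fun_r : pQ (fun _ _ _ _ r => g r) x u p q r = 0 := by simp [pQ]
@[simp]
lemma pR_fun_r : pR (fun _ _ _ _ r => g r) x u p q r = deriv g r := rfl

@[simp]
lemma Dhat_fun_r (f : Jet5) :
    Dhat f (fun _ _ _ _ r => g r) x u p q r = f x u p q r * deriv g r := by
  simp [Dhat]

end OnlyR

local notation "fSq" => (fun _ _ _ _ r => r ^ 2 : Jet5)

lemma I0_sq : I0 fSq = fun _ _ _ _ r => -(2 * r) := by
  funext x u p q r; simp [I0]

lemma I1_sq : I1 fSq = fun _ _ _ _ r => 4 / 3 * r ^ 2 := by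
  funext x u p q r; simp [I1, I0_sq]; ring

lemma I2_sq : I2 fSq = fun _ _ _ _ r => r ^ 2 := by
  funext x u p q r; simp [I2, I0_sq]; ring

lemma I3_sq : I3 fSq = fun _ _ _ _ _ => 0 := by
  funext x u p q r; simp [I3, I0_sq, I1_sq, I2_sq]; ring

lemma I4_sq : I4 fSq = fun _ _ _ _ _ => 1 / 3 := by
  funext x u p q r; simp [I4, I0_sq]; norm_num

lemma I5_sq : I5 fSq = fun _ _ _ _ _ => 0 := by
  funext x u p q r; simp [I5, I4_sq]

lemma I6_sq : I6 fSq = fun _ _ _ _ r => -r := by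
  funext x u p q r; simp [I6, I0_sq, I2_sq, I3_sq, I4_sq]; ring

lemma I8_sq : I8 fSq = fun _ _ _ _ r => 27 / 10 * r ^ 2 := by
  funext x u p q r; simp [I8, I0_sq, I1_sq, I2_sq, I4_sq, I6_sq]; ring

theorem stmt_14 (f : Jet5) (hf : f = fun _ _ _ _ r => r ^ 2) :
    ∀ x u p q r : ℝ,
      I4 f x u p q r = 1 / 3 ∧
      I5 f x u p q r = 0 ∧
      I6 f x u p q r = -r ∧
      I8 f x u p q r = (27 / 10) * r ^ 2 ∧
      I4 f x u p q r ≠ 0 ∧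
      (r ≠ 0 → I8 f x u p q r ≠ 0) := by
  subst hf
  intro x u p q r
  simp only [I4_sq, I5_sq, I6_sq, I8_sq, true_and]
  exact ⟨by norm_num, fun hr => by positivity⟩
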